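/- For dyadic cubes P ⊊ Q in a dyadic grid, a cancellative Haar function h_P^ε and a cancellative Haar function h_Q^η, the commutator satisfies [h_P^ε, I_α^D] h_Q^η = c_α h_Q^η(P) h_P^ε (|Q|^{α/n} − |P|^{α/n}), where h_Q^η(P) denotes the constant value of h_Q^η on P and [b, I_α^D]f = b·I_α^D f − I_α^D(bf). -/

import Mathlib

/-! A cancellative Haar function `h` on a dyadic cube `Q₀` of generation `k₀` is an eigenfunction
of `I_α^D`. The dyadic cubes of generation `≤ k₀` through `x` contain `Q₀` or miss it, so `h` has
mean zero on them; those of generation `k > k₀` lie in a child of `Q₀` or outside `Q₀`, so `h` is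
constant there, equal to `h x`. Summing `Σ_{k > k₀} 2^{-kα}` gives `I_α^D h = c_α |Q₀|^{α/n} h`.
Since `h_Q^η = v` on the support of `h_P^ε`, the product `h_P^ε h_Q^η` is `v h_P^ε`, and the
commutator is the difference of the two eigenvalues times `v h_P^ε`. -/

open MeasureTheory

/-- The dyadic cube of generation `k` indexed by `m ∈ ℤⁿ`; its side length is `2^{-k}`. -/
def dyadicCube (n : ℕ) (k : ℤ) (m : Fin n → ℤ) : Set (Fin n → ℝ) :=
  Set.univ.pi fun i => Set.Ico ((m i : ℝ) * (2:ℝ) ^ (-k)) (((m i : ℝ) + 1) * (2:ℝ) ^ (-k))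

/-- The dyadic fractional integral operator
`I_α^D f = Σ_{Q ∈ D} |Q|^{α/n} ⟨f⟩_Q 1_Q`. -/
noncomputable def IalphaD (n : ℕ) (α : ℝ) (f : (Fin n → ℝ) → ℝ) (x : Fin n → ℝ) : ℝ :=
  ∑' p : ℤ × (Fin n → ℤ),
    (volume (dyadicCube n p.1 p.2)).toReal ^ (α / n) *
      (⨍ y in dyadicCube n p.1 p.2, f y) *
      Set.indicator (dyadicCube n p.1 p.2) (fun _ => (1:ℝ)) x

/-- The constant `c_α = Σ_{k ≥ 1} 2^{-kα} = 2^{-α}/(1 - 2^{-α})`. -/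
noncomputable def cAlpha (α : ℝ) : ℝ := (2:ℝ) ^ (-α) / (1 - (2:ℝ) ^ (-α))

/-- `h` is an L²-normalized cancellative Haar function on the dyadic cube `(k, m)`:
integrable, supported on the cube, mean zero, constant on the dyadic children,
and `‖h‖₂ = 1`. -/
def IsHaar (n : ℕ) (k : ℤ) (m : Fin n → ℤ) (h : (Fin n → ℝ) → ℝ) : Prop :=
  Integrable h volume ∧
  (∀ x, x ∉ dyadicCube n k m → h x = 0) ∧
  (∫ x, h x) = 0 ∧
  (∀ m' : Fin n → ℤ, dyadicCube n (k + 1) m' ⊆ dyadicCube n k m →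
    ∃ c : ℝ, ∀ x ∈ dyadicCube n (k + 1) m', h x = c) ∧
  (∫ x, (h x) ^ 2) = 1

noncomputable def dyadicIndex {n : ℕ} (k : ℤ) (x : Fin n → ℝ) : Fin n → ℤ :=
  fun i => ⌊x i * 2 ^ k⌋

section DyadicCube

variable {n : ℕ}

theorem mem_dyadicCube_iff {k : ℤ} {m : Fin n → ℤ} {x : Fin n → ℝ} :
    x ∈ dyadicCube n k m ↔ dyadicIndex k x = m := by
  simp only [dyadicCube, Set.mem_univ_pi, Set.mem_Ico, funext_iff, dyadicIndex, Int.floor_eq_iff]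
  refine forall_congr' fun i => ?_
  have h2 : (0:ℝ) < 2 ^ k := zpow_pos two_pos k
  rw [zpow_neg, ← div_eq_mul_inv, ← div_eq_mul_inv, div_le_iff₀ h2, lt_div_iff₀ h2]

theorem mem_dyadicCube_dyadicIndex (k : ℤ) (x : Fin n → ℝ) :
    x ∈ dyadicCube n k (dyadicIndex k x) :=
  mem_dyadicCube_iff.2 rfl

theorem Int.floor_mul_two_zpow_of_le (t : ℝ) {k k' : ℤ} (hk : k ≤ k') :
    ⌊t * 2 ^ k⌋ = ⌊t * 2 ^ k'⌋ / 2 ^ (k' - k).toNat := by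
  have h : t * 2 ^ k = t * 2 ^ k' / ((2 ^ (k' - k).toNat : ℕ) : ℝ) := by
    rw [Nat.cast_pow, Nat.cast_ofNat, ← zpow_natCast, Int.toNat_of_nonneg (by omega),
      mul_div_assoc, ← zpow_sub₀ two_ne_zero, sub_sub_cancel]
  rw [h, Int.floor_div_natCast]
  push_cast
  rfl

theorem dyadicIndex_of_le {k k' : ℤ} (hk : k ≤ k') (x : Fin n → ℝ) :
    dyadicIndex k x = fun i => dyadicIndex k' x i / 2 ^ (k' - k).toNat :=
  funext fun i => Int.floor_mul_two_zpow_of_le (x i) hk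

theorem dyadicCube_subset_of_mem {k k' : ℤ} {m m' : Fin n → ℤ} {z : Fin n → ℝ}
    (hk : k ≤ k') (hz' : z ∈ dyadicCube n k' m') (hz : z ∈ dyadicCube n k m) :
    dyadicCube n k' m' ⊆ dyadicCube n k m := by
  intro y hy
  rw [mem_dyadicCube_iff] at hz' hz hy ⊢
  rw [← hz, dyadicIndex_of_le hk, dyadicIndex_of_le hk z, hy, hz']

theorem measurableSet_dyadicCube (k : ℤ) (m : Fin n → ℤ) : MeasurableSet (dyadicCube n k m) :=
  MeasurableSet.univ_pi fun _ => measurableSet_Ico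

theorem volume_dyadicCube (k : ℤ) (m : Fin n → ℤ) :
    volume (dyadicCube n k m) = ENNReal.ofReal (((2:ℝ) ^ (-k)) ^ n) := by
  simp only [dyadicCube, volume_pi_pi, Real.volume_Ico, add_mul, one_mul, add_sub_cancel_left,
    Finset.prod_const, Finset.card_univ, Fintype.card_fin]
  rw [ENNReal.ofReal_pow (zpow_pos two_pos _).le]

theorem volume_dyadicCube_ne_zero (k : ℤ) (m : Fin n → ℤ) :
    volume (dyadicCube n k m) ≠ 0 := by
  rw [volume_dyadicCube, ne_eq, ENNReal.ofReal_eq_zero, not_le]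
  positivity

theorem volume_dyadicCube_ne_top (k : ℤ) (m : Fin n → ℤ) :
    volume (dyadicCube n k m) ≠ ⊤ := by
  rw [volume_dyadicCube]
  exact ENNReal.ofReal_ne_top

theorem volume_dyadicCube_toReal_rpow (hn : 0 < n) (α : ℝ) (k : ℤ) (m : Fin n → ℤ) :
    (volume (dyadicCube n k m)).toReal ^ (α / n) = (2:ℝ) ^ (-k * α) := by
  rw [volume_dyadicCube, ENNReal.toReal_ofReal (by positivity), ← Real.rpow_natCast,
    ← Real.rpow_mul (zpow_pos two_pos _).le, mul_div_cancel₀ _ (by positivity),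
    ← Real.rpow_intCast, ← Real.rpow_mul zero_le_two, Int.cast_neg, neg_mul]

end DyadicCube

section IalphaD

variable {n : ℕ}

theorem IalphaD_eq_tsum_dyadicIndex (hn : 0 < n) (α : ℝ) (f : (Fin n → ℝ) → ℝ)
    (x : Fin n → ℝ) :
    IalphaD n α f x =
      ∑' k : ℤ, (2:ℝ) ^ (-k * α) * ⨍ y in dyadicCube n k (dyadicIndex k x), f y := by
  have hinj : Function.Injective fun k : ℤ => (k, dyadicIndex k x) :=
    fun _ _ h => congrArg Prod.fst h
  rw [IalphaD, ← hinj.tsum_eq]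
  · refine tsum_congr fun k => ?_
    rw [Set.indicator_of_mem (mem_dyadicCube_dyadicIndex k x), mul_one,
      volume_dyadicCube_toReal_rpow hn]
  · rintro ⟨k, m⟩ hp
    by_cases hx : x ∈ dyadicCube n k m
    · exact ⟨k, congrArg (Prod.mk k) (mem_dyadicCube_iff.1 hx)⟩
    · simp [Set.indicator_of_notMem hx] at hp

theorem IalphaD_const_mul (α c : ℝ) (f : (Fin n → ℝ) → ℝ) (x : Fin n → ℝ) :
    IalphaD n α (fun y => c * f y) x = c * IalphaD n α f x := by
  rw [IalphaD, IalphaD, ← tsum_mul_left]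
  refine tsum_congr fun p => ?_
  rw [setAverage_eq, setAverage_eq, integral_const_mul, smul_eq_mul, smul_eq_mul]
  ring

end IalphaD

theorem tsum_ite_lt_two_rpow_neg_mul {α : ℝ} (hα : 0 < α) (k₀ : ℤ) :
    ∑' k : ℤ, (if k₀ < k then (2:ℝ) ^ (-k * α) else 0) = cAlpha α * (2:ℝ) ^ (-k₀ * α) := by
  have hinj : Function.Injective fun j : ℕ => k₀ + 1 + j := fun a b h => by simpa using h
  have hr : (2:ℝ) ^ (-α) < 1 := Real.rpow_lt_one_of_one_lt_of_neg one_lt_two (neg_neg_of_pos hα)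
  rw [← hinj.tsum_eq]
  · have hterm : ∀ j : ℕ, (if k₀ < k₀ + 1 + (j:ℤ) then (2:ℝ) ^ (-((k₀ + 1 + j : ℤ) : ℝ) * α)
        else 0) = (2:ℝ) ^ (-k₀ * α) * 2 ^ (-α) * (2 ^ (-α)) ^ j := by
      intro j
      rw [if_pos (by omega), ← Real.rpow_natCast, ← Real.rpow_mul zero_le_two,
        ← Real.rpow_add two_pos, ← Real.rpow_add two_pos]
      push_cast
      ring_nf
    rw [tsum_congr hterm, tsum_mul_left, tsum_geometric_of_lt_one (by positivity) hr, cAlpha]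
    ring
  · intro k hk
    have hlt : k₀ < k := by
      by_contra h
      exact hk (if_neg h)
    exact ⟨(k - (k₀ + 1)).toNat, by simp only; omega⟩

namespace IsHaar

variable {n : ℕ} {k₀ : ℤ} {m₀ : Fin n → ℤ} {h : (Fin n → ℝ) → ℝ}

theorem setIntegral_dyadicCube_eq_zero_of_le (hh : IsHaar n k₀ m₀ h) {k : ℤ} (hk : k ≤ k₀)
    (m : Fin n → ℤ) : ∫ y in dyadicCube n k m, h y = 0 := by
  obtain ⟨-, hsupp, hmean, -, -⟩ := hh
  by_cases hmeet : ∃ z, z ∈ dyadicCube n k₀ m₀ ∧ z ∈ dyadicCube n k m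
  · obtain ⟨z, hz₀, hz⟩ := hmeet
    rw [setIntegral_eq_integral_of_forall_compl_eq_zero fun y hy =>
      hsupp y fun hy₀ => hy (dyadicCube_subset_of_mem hk hz₀ hz hy₀)]
    exact hmean
  · push Not at hmeet
    rw [setIntegral_congr_fun (measurableSet_dyadicCube k m) fun y hy =>
      hsupp y fun hy₀ => hmeet y hy₀ hy]
    exact integral_zero _ _

theorem apply_eq_of_mem_dyadicCube_of_lt (hh : IsHaar n k₀ m₀ h) {k : ℤ} (hk : k₀ < k)
    {x y : Fin n → ℝ} (hy : y ∈ dyadicCube n k (dyadicIndex k x)) : h y = h x := by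
  obtain ⟨-, hsupp, -, hchild, -⟩ := hh
  have hx_child := mem_dyadicCube_dyadicIndex (k₀ + 1) x
  by_cases hx : x ∈ dyadicCube n k₀ m₀
  · obtain ⟨c, hc⟩ := hchild _ (dyadicCube_subset_of_mem (by omega) hx_child hx)
    have hy_child : y ∈ dyadicCube n (k₀ + 1) (dyadicIndex (k₀ + 1) x) :=
      dyadicCube_subset_of_mem (by omega) (mem_dyadicCube_dyadicIndex k x) hx_child hy
    rw [hc y hy_child, hc x hx_child]
  · have hy₀ : y ∉ dyadicCube n k₀ m₀ := fun hy₀ =>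
      hx (dyadicCube_subset_of_mem hk.le hy hy₀ (mem_dyadicCube_dyadicIndex k x))
    rw [hsupp y hy₀, hsupp x hx]

theorem setAverage_dyadicCube_of_lt (hh : IsHaar n k₀ m₀ h) {k : ℤ} (hk : k₀ < k)
    (x : Fin n → ℝ) : ⨍ y in dyadicCube n k (dyadicIndex k x), h y = h x := by
  rw [setAverage_congr_fun (measurableSet_dyadicCube _ _)
      (ae_of_all _ fun y hy => hh.apply_eq_of_mem_dyadicCube_of_lt hk hy),
    setAverage_const (volume_dyadicCube_ne_zero _ _) (volume_dyadicCube_ne_top _ _)]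

theorem IalphaD_eq (hh : IsHaar n k₀ m₀ h) (hn : 0 < n) {α : ℝ} (hα : 0 < α)
    (x : Fin n → ℝ) :
    IalphaD n α h x = cAlpha α * (volume (dyadicCube n k₀ m₀)).toReal ^ (α / n) * h x := by
  have hterm : ∀ k : ℤ, (2:ℝ) ^ (-k * α) * ⨍ y in dyadicCube n k (dyadicIndex k x), h y =
      h x * if k₀ < k then (2:ℝ) ^ (-k * α) else 0 := by
    intro k
    split_ifs with hk
    · rw [hh.setAverage_dyadicCube_of_lt hk, mul_comm]
    · rw [setAverage_eq, hh.setIntegral_dyadicCube_eq_zero_of_le (not_lt.1 hk), smul_zero,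
        mul_zero, mul_zero]
  rw [IalphaD_eq_tsum_dyadicIndex hn, tsum_congr hterm, tsum_mul_left,
    tsum_ite_lt_two_rpow_neg_mul hα, volume_dyadicCube_toReal_rpow hn]
  ring

end IsHaar

theorem stmt10_general (n : ℕ) (hn : 0 < n) (α : ℝ) (hα : 0 < α)
    (kP : ℤ) (mP : Fin n → ℤ) (kQ : ℤ) (mQ : Fin n → ℤ)
    (hP hQ : (Fin n → ℝ) → ℝ)
    (hhP : IsHaar n kP mP hP) (hhQ : IsHaar n kQ mQ hQ)
    (v : ℝ) (hv : ∀ x ∈ dyadicCube n kP mP, hQ x = v) :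
    ∀ x, hP x * IalphaD n α hQ x - IalphaD n α (fun y => hP y * hQ y) x =
      cAlpha α * v * hP x *
        ((volume (dyadicCube n kQ mQ)).toReal ^ (α / n) -
          (volume (dyadicCube n kP mP)).toReal ^ (α / n)) := by
  intro x
  have hprod : (fun y => hP y * hQ y) = fun y => v * hP y := funext fun y => by
    by_cases hy : y ∈ dyadicCube n kP mP
    · rw [hv y hy, mul_comm]
    · rw [hhP.2.1 y hy, zero_mul, mul_zero]
  rw [hprod, IalphaD_const_mul, hhP.IalphaD_eq hn hα x, hhQ.IalphaD_eq hn hα x]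
  linear_combination cAlpha α * (volume (dyadicCube n kQ mQ)).toReal ^ (α / n) * congrFun hprod x

/-- for dyadic cubes `P ⊊ Q`, cancellative Haar functions
`h_P^ε`, `h_Q^η`, and `v` the constant value of `h_Q^η` on `P`:
`[h_P^ε, I_α^D] h_Q^η = c_α v h_P^ε (|Q|^{α/n} - |P|^{α/n})`. -/
theorem stmt10 (n : ℕ) (hn : 0 < n) (α : ℝ) (hα : 0 < α) (hαn : α < n)
    (kP : ℤ) (mP : Fin n → ℤ) (kQ : ℤ) (mQ : Fin n → ℤ)
    (hP hQ : (Fin n → ℝ) → ℝ)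
    (hhP : IsHaar n kP mP hP) (hhQ : IsHaar n kQ mQ hQ)
    (hsub : dyadicCube n kP mP ⊂ dyadicCube n kQ mQ)
    (v : ℝ) (hv : ∀ x ∈ dyadicCube n kP mP, hQ x = v) :
    ∀ x, hP x * IalphaD n α hQ x - IalphaD n α (fun y => hP y * hQ y) x =
      cAlpha α * v * hP x *
        ((volume (dyadicCube n kQ mQ)).toReal ^ (α / n) -
          (volume (dyadicCube n kP mP)).toReal ^ (α / n)) :=
  stmt10_general n hn α hα kP mP kQ mQ hP hQ hhP hhQ v hv
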